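/- arXiv:1106.0856 — 5 statements merged into one kernel-verified Lean document; each statement's English description precedes it below -/
import Mathlib

section
/- Let $R = [x_0,x_1] \times [y_0,y_1]$ be a closed box in $\mathbb{R}^2$, and let $V = \{(x,y) \in \mathbb{R}^2 : |(x - a)(y - b)| < \varepsilon\}$ be a hyperbolic region for some $(a,b) \in \mathbb{R}^2$ and $\varepsilon > 0$. If all four corners $(x_0,y_0), (x_0,y_1), (x_1,y_0), (x_1,y_1)$ belong to $V$, then $R \subseteq V$. -/
theorem stmt_0 (x0 x1 y0 y1 a b ε : ℝ) (hε : 0 < ε)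
    (h1 : |(x0 - a) * (y0 - b)| < ε) (h2 : |(x0 - a) * (y1 - b)| < ε)
    (h3 : |(x1 - a) * (y0 - b)| < ε) (h4 : |(x1 - a) * (y1 - b)| < ε) :
    Set.Icc x0 x1 ×ˢ Set.Icc y0 y1 ⊆ {p : ℝ × ℝ | |(p.1 - a) * (p.2 - b)| < ε} := by
  rintro ⟨x, y⟩ ⟨⟨hx0, hx1⟩, ⟨hy0, hy1⟩⟩
  simp only [Set.mem_setOf_eq, abs_mul] at *
  have hx : |x - a| ≤ max |x0 - a| |x1 - a| :=
    abs_le_max_abs_abs (by linarith) (by linarith)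
  have hy : |y - b| ≤ max |y0 - b| |y1 - b| :=
    abs_le_max_abs_abs (by linarith) (by linarith)
  have hmul := mul_le_mul hx hy (abs_nonneg _) (le_trans (abs_nonneg _) hx)
  rcases max_cases |x0 - a| |x1 - a| with ⟨h,_⟩|⟨h,_⟩ <;>
  rcases max_cases |y0 - b| |y1 - b| with ⟨h',_⟩|⟨h',_⟩ <;>
  rw [h, h'] at hmul <;> linarith
end

section
/- Let $F$ be a number field with ring of integers $\mathcal{O}_F$ and field norm $\mathrm{Nm}: F \to \mathbb{Q}$. For nonzero $\beta \in \mathcal{O}_F$ and $\alpha \in \mathcal{O}_F$, there exists a 2-stage decreasing division chain for $(\alpha,\beta)$ (i.e., $q_1, q_2, r_1, r_2 \in \mathcal{O}_F$ with $\alpha = q_1\beta + r_1$, $\beta = q_2 r_1 + r_2$, $r_1 \neq 0$, and $|\mathrm{Nm}(r_2)| < |\mathrm{Nm}(\beta)|$) if and only if there exist $q_1, q_2 \in \mathcal{O}_F$ with $q_2 \neq 0$ such that $|\mathrm{Nm}(\alpha/\beta - (q_1 + 1/q_2))| < 1/|\mathrm{Nm}(q_2)|$. -/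
open NumberField

lemma abs_norm_neg_aux (F : Type*) [Field F] [NumberField F] (x : F) :
    |Algebra.norm ℚ (-x)| = |Algebra.norm ℚ x| := by
  have h1 : Algebra.norm ℚ (-1 : F) * Algebra.norm ℚ (-1 : F) = 1 := by
    rw [← map_mul]; simp
  have hx : (-x) = (-1) * x := by ring
  rw [hx, map_mul, abs_mul]
  rcases mul_self_eq_one_iff.mp h1 with h | h <;> simp [h]

lemma key_aux (F : Type*) [Field F] [NumberField F]
    (α β q1 q2 : NumberField.RingOfIntegers F) (hβ : β ≠ 0) (hq2 : q2 ≠ 0) :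
    |Algebra.norm ℚ (((β - q2 * (α - q1 * β)) : RingOfIntegers F) : F)| =
      |Algebra.norm ℚ ((α : F) / (β : F) - ((q1 : F) + 1 / (q2 : F)))| *
        |Algebra.norm ℚ (q2 : F)| * |Algebra.norm ℚ (β : F)| := by
  have hβ' : (β : F) ≠ 0 := by exact_mod_cast hβ
  have hq2' : (q2 : F) ≠ 0 := by exact_mod_cast hq2
  have e : ((β - q2 * (α - q1 * β) : RingOfIntegers F) : F) =
      -((α : F) / (β : F) - ((q1 : F) + 1 / (q2 : F))) * (q2 : F) * (β : F) := by
    push_cast; field_simp; ring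
  rw [e, map_mul, map_mul, abs_mul, abs_mul, abs_norm_neg_aux]

theorem stmt_3 (F : Type*) [Field F] [NumberField F]
    (α β : NumberField.RingOfIntegers F) (hβ : β ≠ 0) :
    (∃ q1 q2 r1 r2 : NumberField.RingOfIntegers F,
        α = q1 * β + r1 ∧ β = q2 * r1 + r2 ∧ r1 ≠ 0 ∧
        |Algebra.norm ℚ (r2 : F)| < |Algebra.norm ℚ (β : F)|) ↔
    (∃ q1 q2 : NumberField.RingOfIntegers F, q2 ≠ 0 ∧
        |Algebra.norm ℚ ((α : F) / (β : F) - ((q1 : F) + 1 / (q2 : F)))| <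
          1 / |Algebra.norm ℚ (q2 : F)|) := by
  have hβ' : (β : F) ≠ 0 := by exact_mod_cast hβ
  have hNβ : 0 < |Algebra.norm ℚ (β : F)| :=
    abs_pos.mpr ((Algebra.norm_ne_zero_iff).mpr hβ')
  constructor
  · rintro ⟨q1, q2, r1, r2, h1, h2, hr1, hlt⟩
    have hq2 : q2 ≠ 0 := by
      rintro rfl
      rw [show β = r2 by linear_combination h2] at hlt
      exact lt_irrefl _ hlt
    have hq2' : (q2 : F) ≠ 0 := by exact_mod_cast hq2
    have hNq2 : 0 < |Algebra.norm ℚ (q2 : F)| :=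
      abs_pos.mpr ((Algebra.norm_ne_zero_iff).mpr hq2')
    have hk := key_aux F α β q1 q2 hβ hq2
    have hr2eq : β - q2 * (α - q1 * β) = r2 := by linear_combination h2 - q2 * h1
    rw [hr2eq] at hk
    rw [hk] at hlt
    refine ⟨q1, q2, hq2, ?_⟩
    rw [lt_div_iff₀ hNq2]
    nlinarith
  · rintro ⟨q1, q2, hq2, hlt⟩
    have hq2' : (q2 : F) ≠ 0 := by exact_mod_cast hq2
    have hNq2 : 0 < |Algebra.norm ℚ (q2 : F)| :=
      abs_pos.mpr ((Algebra.norm_ne_zero_iff).mpr hq2')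
    have hk := key_aux F α β q1 q2 hβ hq2
    have hd := abs_nonneg (Algebra.norm ℚ ((α : F) / (β : F) - ((q1 : F) + 1 / (q2 : F))))
    rw [lt_div_iff₀ hNq2] at hlt
    refine ⟨q1, q2, α - q1 * β, β - q2 * (α - q1 * β), by ring, by ring, ?_, ?_⟩
    · rintro h
      rw [show β - q2 * (α - q1 * β) = β by rw [h]; ring] at hk
      nlinarith
    · rw [hk]; nlinarith
end

section
/- Let $F$ be a real quadratic field with discriminant $d(F)$, and assume Ennola's bound: the euclidean minimum $M(F) = \inf\{\mu \in \mathbb{R} : \forall x \in F\ \exists y \in \mathcal{O}_F,\ |\mathrm{Nm}(x-y)| \le \mu\}$ satisfies $M(F) \ge \sqrt{d(F)}/(16+6\sqrt{6})$. Let $n$ be a positive integer and $t = \mathrm{lcm}(1,2,\dots,n)$. If $d(F) > (16+6\sqrt{6})^2 \cdot t^4$, then there exists $z \in F$ such that $|\mathrm{Nm}(z - q)| > 1$ for every $q \in \mathcal{CF}_2(n)$. -/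
/-!
Ennola's bound and the size of `d(F)` give a point `x ∈ F` whose distance (in norm) to every
integer exceeds `t²`. Every `q = q₁ + 1/q₂ ∈ 𝒞ℱ₂(n)` lies in `(1/t)𝒪_F`, because `q₂` divides
`|Nm q₂| ≤ n`, which divides `t`. Hence `Nm(x/t - q) = Nm(x - tq)/t²` with `tq ∈ 𝒪_F`, so `z = x/t`
is at norm-distance more than `1` from all of `𝒞ℱ₂(n)`.
-/

open NumberField Finset

lemma exists_forall_lt_of_lt_sInf {α β : Type*} [Nonempty α] {f : α → β → ℝ}
    (hf : ∀ x y, 0 ≤ f x y) {c : ℝ} (hc : c < sInf {μ : ℝ | ∀ x, ∃ y, f x y ≤ μ}) :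
    ∃ x, ∀ y, c < f x y := by
  have hbdd : BddBelow {μ : ℝ | ∀ x, ∃ y, f x y ≤ μ} := by
    refine ⟨0, fun μ hμ => ?_⟩
    obtain ⟨y, hy⟩ := hμ (Classical.arbitrary α)
    exact (hf _ y).trans hy
  simpa using notMem_of_lt_csInf hc hbdd

lemma lt_sqrt_div_of_sq_mul_sq_lt {a c d : ℝ} (ha : 0 ≤ a) (hc : 0 < c) (h : c ^ 2 * a ^ 2 < d) :
    a < Real.sqrt d / c := by
  rw [lt_div_iff₀ hc, Real.lt_sqrt (by positivity)]
  linarith [mul_pow a c 2]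

lemma Algebra.norm_div {K L : Type*} [Field K] [Field L] [Algebra K L] [FiniteDimensional K L]
    (x y : L) :
    Algebra.norm K (x / y) = Algebra.norm K x / Algebra.norm K y := by
  rw [div_eq_mul_inv, map_mul, Algebra.norm_inv, div_eq_mul_inv]

lemma dvd_natAbs_norm {S : Type*} [CommRing S] [IsDedekindDomain S] [Module.Free ℤ S]
    [Module.Finite ℤ S] (x : S) : x ∣ ((Algebra.norm ℤ x).natAbs : S) := by
  rw [← Ideal.absNorm_span_singleton, ← Ideal.mem_span_singleton]
  exact Ideal.absNorm_mem _

lemma dvd_lcm_Icc_of_norm_le {K : Type*} [Field K] [NumberField K] {q : 𝓞 K} (hq : q ≠ 0)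
    {n : ℕ} (hle : |Algebra.norm ℚ (q : K)| ≤ n) : q ∣ (((Icc 1 n).lcm id : ℕ) : 𝓞 K) := by
  have hpos : 0 < (Algebra.norm ℤ q).natAbs :=
    Int.natAbs_pos.mpr (Algebra.norm_eq_zero_iff.not.mpr hq)
  have hle' : (Algebra.norm ℤ q).natAbs ≤ n := by
    rw [← Algebra.coe_norm_int, ← Int.cast_abs, Int.abs_eq_natAbs] at hle
    exact_mod_cast hle
  obtain ⟨k, hk⟩ := Finset.dvd_lcm (f := id) (Finset.mem_Icc.mpr ⟨hpos, hle'⟩)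
  exact (dvd_natAbs_norm q).trans ⟨k, by rw [hk, Nat.cast_mul, id]⟩

lemma exists_lcm_Icc_mul_eq {K : Type*} [Field K] [NumberField K] (q₁ q₂ : 𝓞 K) (hq₂ : q₂ ≠ 0)
    {n : ℕ} (hle : |Algebra.norm ℚ (q₂ : K)| ≤ n) :
    ∃ y : 𝓞 K, (((Icc 1 n).lcm id : ℕ) : K) * (q₁ + 1 / q₂) = y := by
  obtain ⟨w, hw⟩ := dvd_lcm_Icc_of_norm_le hq₂ hle
  have hq₂' : (q₂ : K) ≠ 0 := RingOfIntegers.coe_ne_zero_iff.mpr hq₂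
  have hwK : (((Icc 1 n).lcm id : ℕ) : K) = q₂ * w := by exact_mod_cast congrArg ((↑) : 𝓞 K → K) hw
  refine ⟨(Icc 1 n).lcm id * q₁ + w, ?_⟩
  push_cast
  rw [hwK]
  field_simp

theorem stmt_12_general (F : Type*) [Field F] [NumberField F]
    (hdeg : Module.finrank ℚ F = 2)
    (hEnnola : Real.sqrt (NumberField.discr F) / (16 + 6 * Real.sqrt 6) ≤
      sInf {μ : ℝ | ∀ x : F, ∃ y : NumberField.RingOfIntegers F,
        ((|Algebra.norm ℚ (x - (y : F))| : ℚ) : ℝ) ≤ μ})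
    (n : ℕ) (t : ℕ) (ht : t = (Finset.Icc 1 n).lcm id)
    (hd : ((16 + 6 * Real.sqrt 6) ^ 2 * (t : ℝ) ^ 4) < (NumberField.discr F : ℝ)) :
    ∃ z : F, ∀ q1 q2 : NumberField.RingOfIntegers F, q2 ≠ 0 →
      |Algebra.norm ℚ (q2 : F)| ≤ (n : ℚ) →
      1 < |Algebra.norm ℚ (z - ((q1 : F) + 1 / (q2 : F)))| := by
  have ht0 : t ≠ 0 := by simp [ht, Finset.lcm_eq_zero_iff]
  have hfar : (t : ℝ) ^ 2 < sInf {μ : ℝ | ∀ x : F, ∃ y : 𝓞 F,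
      ((|Algebra.norm ℚ (x - (y : F))| : ℚ) : ℝ) ≤ μ} :=
    (lt_sqrt_div_of_sq_mul_sq_lt (by positivity) (by positivity) (by linarith)).trans_le hEnnola
  obtain ⟨x, hx⟩ := exists_forall_lt_of_lt_sInf (fun _ _ => by positivity) hfar
  refine ⟨x / t, fun q1 q2 hq2 hle => ?_⟩
  obtain ⟨y, hy⟩ := exists_lcm_Icc_mul_eq q1 q2 hq2 hle
  rw [← ht] at hy
  have hsub : x / t - (q1 + 1 / q2) = (x - y) / (t : ℚ) := by
    rw [← hy]
    field_simp
    push_cast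
    ring
  have htpos : (0 : ℚ) < (t : ℚ) ^ 2 := by positivity
  rw [hsub, Algebra.norm_div, ← eq_ratCast (algebraMap ℚ F), Algebra.norm_algebraMap, hdeg,
    abs_div, abs_of_pos htpos, one_lt_div htpos]
  exact_mod_cast hx y

theorem stmt_12 (F : Type*) [Field F] [NumberField F]
    (hdeg : Module.finrank ℚ F = 2) (v1 v2 : F →+* ℝ) (hv : v1 ≠ v2)
    (hEnnola : Real.sqrt (NumberField.discr F) / (16 + 6 * Real.sqrt 6) ≤
      sInf {μ : ℝ | ∀ x : F, ∃ y : NumberField.RingOfIntegers F,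
        ((|Algebra.norm ℚ (x - (y : F))| : ℚ) : ℝ) ≤ μ})
    (n : ℕ) (hn : 0 < n) (t : ℕ) (ht : t = (Finset.Icc 1 n).lcm id)
    (hd : ((16 + 6 * Real.sqrt 6) ^ 2 * (t : ℝ) ^ 4) < (NumberField.discr F : ℝ)) :
    ∃ z : F, ∀ q1 q2 : NumberField.RingOfIntegers F, q2 ≠ 0 →
      |Algebra.norm ℚ (q2 : F)| ≤ (n : ℚ) →
      1 < |Algebra.norm ℚ (z - ((q1 : F) + 1 / (q2 : F)))| :=
  stmt_12_general F hdeg hEnnola n t ht hd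
end

section
/- Let $F$ be a number field whose ring of integers $\mathcal{O}_F$ is 2-stage euclidean with respect to the absolute norm: every pair $\alpha, \beta \in \mathcal{O}_F$ with $\beta \neq 0$ admits a $k$-stage division chain ($k \le 2$) whose final remainder $r_k$ satisfies $|\mathrm{Nm}(r_k)| < |\mathrm{Nm}(\beta)|$. Then for every pair $\alpha, \beta \in \mathcal{O}_F$ with $\beta \neq 0$, the fraction $\alpha/\beta$ admits a finite continued fraction expansion $[q_1, \dots, q_n]$ with all $q_i \in \mathcal{O}_F$. -/
/-- Finite continued fractions: `contFrac [q1, ..., qn] = q1 + 1/(q2 + 1/(...))`. -/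
def contFrac {F : Type*} [Field F] : List F → F
  | [] => 0
  | [q] => q
  | q :: rest => q + (contFrac rest)⁻¹

lemma contFrac_cons {F : Type*} [Field F] (q : F) (L : List F) (h : L ≠ []) :
    contFrac (q :: L) = q + (contFrac L)⁻¹ := by
  cases L with
  | nil => exact absurd rfl h
  | cons a t => rfl

lemma mapCoe_eq_mapAlgebraMap (F : Type*) [Field F] [NumberField F]
    (L : List (NumberField.RingOfIntegers F)) :
    (List.map (fun x => (x : F)) L) =
      L.map (fun x => algebraMap (NumberField.RingOfIntegers F) F x) := by
  induction L with
  | nil => rfl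
  | cons a t ih => rw [List.map_cons, ← ih]; rfl

theorem stmt_15 (F : Type*) [Field F] [NumberField F]
    (h2 : ∀ α β : NumberField.RingOfIntegers F, β ≠ 0 →
      (∃ q1 r1 : NumberField.RingOfIntegers F, α = q1 * β + r1 ∧
        |Algebra.norm ℚ (r1 : F)| < |Algebra.norm ℚ (β : F)|) ∨
      (∃ q1 q2 r1 r2 : NumberField.RingOfIntegers F,
        α = q1 * β + r1 ∧ β = q2 * r1 + r2 ∧
        |Algebra.norm ℚ (r2 : F)| < |Algebra.norm ℚ (β : F)|)) :
    ∀ α β : NumberField.RingOfIntegers F, β ≠ 0 →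
      ∃ L : List (NumberField.RingOfIntegers F), L ≠ [] ∧
        (α : F) / (β : F) = contFrac (L.map (fun x => (x : F))) := by
  have key : ∀ x y : NumberField.RingOfIntegers F,
      |Algebra.norm ℚ (x : F)| < |Algebra.norm ℚ (y : F)| →
      (Algebra.norm ℤ x).natAbs < (Algebra.norm ℤ y).natAbs := by
    intro x y h
    rw [← Algebra.coe_norm_int, ← Algebra.coe_norm_int] at h
    have h2 : |(Algebra.norm ℤ x : ℚ)| < |(Algebra.norm ℤ y : ℚ)| := h
    rw [← Int.cast_abs, ← Int.cast_abs, Int.cast_lt, Int.abs_eq_natAbs,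
      Int.abs_eq_natAbs, Int.ofNat_lt] at h2
    exact h2
  suffices H : ∀ n : ℕ, ∀ α β : NumberField.RingOfIntegers F, β ≠ 0 →
      (Algebra.norm ℤ β).natAbs = n →
      ∃ L : List (NumberField.RingOfIntegers F), L ≠ [] ∧
        (α : F) / (β : F) = contFrac (L.map
          (fun x => algebraMap (NumberField.RingOfIntegers F) F x)) by
    intro α β hβ
    obtain ⟨L, hL, hLeq⟩ := H _ α β hβ rfl
    exact ⟨L, hL, by rw [mapCoe_eq_mapAlgebraMap]; exact hLeq⟩
  intro n
  induction n using Nat.strong_induction_on with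
  | _ n ih =>
    intro α β hβ hn
    have hβF : (β : F) ≠ 0 := by simpa using hβ
    have base : ∀ q1 r1 : NumberField.RingOfIntegers F, α = q1 * β + r1 → r1 = 0 →
        ∃ L : List (NumberField.RingOfIntegers F), L ≠ [] ∧
          (α : F) / (β : F) = contFrac (L.map
            (fun x => algebraMap (NumberField.RingOfIntegers F) F x)) := by
      intro q1 r1 heq hr
      subst hr
      refine ⟨[q1], by simp, ?_⟩
      have hα : (α : F) = q1 * β := by rw [heq]; push_cast; ring
      rw [List.map_cons, List.map_nil]
      show (α : F) / β = (q1 : F)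
      rw [hα, mul_div_assoc, div_self hβF, mul_one]
    rcases h2 α β hβ with ⟨q1, r1, heq, hlt⟩ | ⟨q1, q2, r1, r2, heq1, heq2, hlt⟩
    · by_cases hr1 : r1 = 0
      · exact base q1 r1 heq hr1
      · have hr1F : (r1 : F) ≠ 0 := by simpa using hr1
        obtain ⟨L, hL, hLeq⟩ := ih _ (hn ▸ key r1 β hlt) β r1 hr1 rfl
        refine ⟨q1 :: L, by simp, ?_⟩
        rw [List.map_cons, contFrac_cons _ _ (by simpa using hL), ← hLeq]
        have hα : (α : F) = q1 * β + r1 := by rw [heq]; push_cast; ring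
        show (α : F) / β = (q1 : F) + ((β : F) / r1)⁻¹
        rw [hα]
        field_simp
    · by_cases hr1 : r1 = 0
      · exact base q1 r1 heq1 hr1
      · have hr1F : (r1 : F) ≠ 0 := by simpa using hr1
        have hα : (α : F) = q1 * β + r1 := by rw [heq1]; push_cast; ring
        have hβ2 : (β : F) = q2 * r1 + r2 := by rw [heq2]; push_cast; ring
        by_cases hr2 : r2 = 0
        · refine ⟨[q1, q2], by simp, ?_⟩
          have hβ2' : (β : F) = q2 * r1 := by
            have h0 : (r2 : F) = 0 := by simp [hr2]
            rw [hβ2, h0, add_zero]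
          have hq2 : (q2 : F) ≠ 0 := fun h0 => hβF (by rw [hβ2', h0, zero_mul])
          rw [List.map_cons, List.map_cons, List.map_nil]
          show (α : F) / β = (q1 : F) + ((q2 : F))⁻¹
          rw [hα, hβ2']
          field_simp
        · have hr2F : (r2 : F) ≠ 0 := by simpa using hr2
          obtain ⟨L, hL, hLeq⟩ := ih _ (hn ▸ key r2 β hlt) r1 r2 hr2 rfl
          refine ⟨q1 :: q2 :: L, by simp, ?_⟩
          rw [List.map_cons, List.map_cons,
            contFrac_cons (algebraMap _ F q1) _ (by simp),
            contFrac_cons (algebraMap _ F q2) _ (by simpa using hL), ← hLeq]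
          show (α : F) / β = (q1 : F) + (((q2 : F)) + ((r1 : F) / r2)⁻¹)⁻¹
          have hd : (q2 : F) + ((r1 : F) / r2)⁻¹ = (β : F) / r1 := by
            rw [hβ2]; field_simp
          rw [hd, hα]
          field_simp
end

section
/- Let $F$ be a real quadratic field, $v : F \to \mathbb{R}^2$ the embedding by the two real places, and $D$ the fundamental domain of the lattice $v(\mathcal{O}_F)$. Suppose there is a finite set $Z \subseteq \mathcal{CF}_2$ (length-2 continued fractions over $\mathcal{O}_F$) such that $D \subseteq \bigcup_{q \in Z} V(q)$, where $V(q) = \{x \in \mathbb{R}^2 : |\mathrm{Nm}(x - v(q))| < 1/|\mathrm{Nm}(q_2)|\}$ for $q = [q_1,q_2]$. Then every pair $\alpha, \beta \in \mathcal{O}_F$, $\beta \neq 0$, admits a 2-stage decreasing division chain; i.e., $F$ is 2-stage euclidean. -/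
/-!
Write `α / β = v(γ) + d` with `γ ∈ 𝓞_F` and `d ∈ D`. The cover gives `q ∈ Z` with `d ∈ V(q)`, and by
translation invariance `v(α / β) ∈ V([q₁ + γ, q₂])`. With `r₁ = α - (q₁ + γ) β` and `r₂ = β - q₂ r₁`
one has `α / β - (q₁ + γ + 1 / q₂) = -r₂ / (β q₂)`, so membership in that region says exactly
`|Nm r₂| < |Nm β|`, the norm being the product of the two real embeddings.
-/

/-- The hyperbolic region `V(q)` associated to a length-2 continued fraction
`q = q1 + 1/q2`, inside `ℝ²` via the two real embeddings `v1, v2`. -/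
def hypRegion {F : Type*} [Field F] [NumberField F] (v1 v2 : F →+* ℝ)
    (q : NumberField.RingOfIntegers F × NumberField.RingOfIntegers F) : Set (ℝ × ℝ) :=
  {x : ℝ × ℝ | |(x.1 - v1 ((q.1 : F) + 1 / (q.2 : F))) * (x.2 - v2 ((q.1 : F) + 1 / (q.2 : F)))| <
    1 / |(Algebra.norm ℚ (q.2 : F) : ℝ)|}

open Module NumberField

theorem exists_int_sub_eq_fract_combination {w1 w2 : ℝ} (hw : w1 ≠ w2) (p : ℝ × ℝ) :
    ∃ m n : ℤ, ∃ a b : ℝ, 0 ≤ a ∧ a < 1 ∧ 0 ≤ b ∧ b < 1 ∧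
      p - ((m : ℝ) • ((1 : ℝ), (1 : ℝ)) + (n : ℝ) • (w1, w2)) =
        a • ((1 : ℝ), (1 : ℝ)) + b • (w1, w2) := by
  have hw' : w2 - w1 ≠ 0 := sub_ne_zero.mpr hw.symm
  set b := (p.2 - p.1) / (w2 - w1)
  set a := p.1 - b * w1
  refine ⟨⌊a⌋, ⌊b⌋, Int.fract a, Int.fract b, Int.fract_nonneg a, Int.fract_lt_one a,
    Int.fract_nonneg b, Int.fract_lt_one b, ?_⟩
  ext <;> simp only [Int.fract, Prod.fst_sub, Prod.snd_sub, Prod.fst_add, Prod.snd_add,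
    Prod.smul_fst, Prod.smul_snd, smul_eq_mul, a, b] <;> field_simp <;> ring

section

variable {F : Type*} [Field F] [NumberField F]

theorem norm_eq_mul_of_finrank_eq_two (hdeg : finrank ℚ F = 2) {v1 v2 : F →+* ℝ} (hv : v1 ≠ v2)
    (x : F) : (Algebra.norm ℚ x : ℝ) = v1 x * v2 x := by
  classical
  let σ : (F →+* ℝ) → (F →ₐ[ℚ] ℂ) := fun v => (Complex.ofRealHom.comp v).toRatAlgHom
  have hσ : σ v1 ≠ σ v2 := fun h =>
    hv <| RingHom.ext fun y => Complex.ofReal_injective (DFunLike.congr_fun h y)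
  have huniv : Finset.univ = {σ v1, σ v2} := by
    refine (Finset.eq_univ_of_card _ ?_).symm
    rw [Finset.card_pair hσ, AlgHom.card, hdeg]
  have h := Algebra.norm_eq_prod_embeddings ℚ ℂ x
  rw [huniv, Finset.prod_pair hσ] at h
  apply Complex.ofReal_injective
  push_cast
  exact h

theorem ringHom_eq_of_apply_basis_eq {R ι : Type*} [Ring R]
    (B : Basis ι ℤ (𝓞 F)) {v1 v2 : F →+* R} (h : ∀ i, v1 (B i) = v2 (B i)) : v1 = v2 := by
  apply IsLocalization.ringHom_ext (nonZeroDivisors (𝓞 F))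
  have := B.ext (f₁ := (v1.comp (algebraMap (𝓞 F) F)).toIntAlgHom.toLinearMap)
    (f₂ := (v2.comp (algebraMap (𝓞 F) F)).toIntAlgHom.toLinearMap) h
  ext y
  exact LinearMap.congr_fun this y

theorem sub_mem_hypRegion_iff (v1 v2 : F →+* ℝ) (q : 𝓞 F × 𝓞 F) (γ : 𝓞 F) (x : ℝ × ℝ) :
    x - v1.prod v2 γ ∈ hypRegion v1 v2 q ↔ x ∈ hypRegion v1 v2 (q.1 + γ, q.2) := by
  simp only [hypRegion, Set.mem_ofPred_eq, Prod.fst_sub, Prod.snd_sub, RingHom.prod_apply,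
    map_add, sub_sub, add_comm (v1 γ), add_comm (v2 γ), add_assoc]

theorem exists_chain_of_mem_hypRegion (hdeg : finrank ℚ F = 2) {v1 v2 : F →+* ℝ} (hv : v1 ≠ v2)
    {α β : 𝓞 F} (hβ : β ≠ 0) {q : 𝓞 F × 𝓞 F} (hq : v1.prod v2 ((α : F) / β) ∈ hypRegion v1 v2 q) :
    ∃ r1 r2 : 𝓞 F, α = q.1 * β + r1 ∧ β = q.2 * r1 + r2 ∧
      |Algebra.norm ℚ (r2 : F)| < |Algebra.norm ℚ (β : F)| := by
  set r1 := α - q.1 * β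
  set r2 := β - q.2 * r1
  refine ⟨r1, r2, by ring, by ring, ?_⟩
  set y : F := α / β - (q.1 + 1 / q.2)
  have hy : |v1 y * v2 y| < 1 / |v1 q.2 * v2 q.2| := by
    simpa only [y, hypRegion, Set.mem_ofPred_eq, RingHom.prod_apply, map_sub,
      norm_eq_mul_of_finrank_eq_two hdeg hv] using hq
  have hq2N : 0 < |v1 q.2 * v2 q.2| := one_div_pos.mp ((abs_nonneg _).trans_lt hy)
  have hβF : (β : F) ≠ 0 := by exact_mod_cast hβ
  have hq2F : (q.2 : F) ≠ 0 := by
    rintro h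
    simp [h] at hq2N
  have hβN : 0 < |v1 β * v2 β| := by simp [hβF]
  have hr2 : (r2 : F) = -(y * β * q.2) := by
    simp only [r2, r1, y]
    push_cast
    field_simp
    ring
  have key : |v1 r2 * v2 r2| = |v1 y * v2 y| * |v1 β * v2 β| * |v1 q.2 * v2 q.2| := by
    rw [hr2, map_neg, map_neg, map_mul, map_mul, map_mul, map_mul, ← abs_mul, ← abs_mul]
    ring_nf
  have : |v1 r2 * v2 r2| < |v1 β * v2 β| := calc
    |v1 r2 * v2 r2| = |v1 y * v2 y| * |v1 β * v2 β| * |v1 q.2 * v2 q.2| := key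
    _ < 1 / |v1 q.2 * v2 q.2| * |v1 β * v2 β| * |v1 q.2 * v2 q.2| := by gcongr
    _ = |v1 β * v2 β| := by field_simp
  rw [← norm_eq_mul_of_finrank_eq_two hdeg hv, ← norm_eq_mul_of_finrank_eq_two hdeg hv] at this
  exact_mod_cast this

end

theorem stmt_17_general (F : Type*) [Field F] [NumberField F]
    (hdeg : Module.finrank ℚ F = 2) (v1 v2 : F →+* ℝ) (hv : v1 ≠ v2)
    (B : Module.Basis (Fin 2) ℤ (NumberField.RingOfIntegers F)) (hB : B 0 = 1)
    (D : Set (ℝ × ℝ))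
    (hD : D = {p | ∃ a b : ℝ, 0 ≤ a ∧ a < 1 ∧ 0 ≤ b ∧ b < 1 ∧
      p = a • ((1 : ℝ), (1 : ℝ)) + b • (v1 ((B 1 : NumberField.RingOfIntegers F) : F),
        v2 ((B 1 : NumberField.RingOfIntegers F) : F))})
    (Z : Finset (NumberField.RingOfIntegers F × NumberField.RingOfIntegers F))
    (hcover : D ⊆ ⋃ q ∈ Z, hypRegion v1 v2 q) :
    ∀ α β : NumberField.RingOfIntegers F, β ≠ 0 →
      (∃ q1 r1 : NumberField.RingOfIntegers F, α = q1 * β + r1 ∧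
        |Algebra.norm ℚ (r1 : F)| < |Algebra.norm ℚ (β : F)|) ∨
      (∃ q1 q2 r1 r2 : NumberField.RingOfIntegers F,
        α = q1 * β + r1 ∧ β = q2 * r1 + r2 ∧
        |Algebra.norm ℚ (r2 : F)| < |Algebra.norm ℚ (β : F)|) := by
  intro α β hβ
  right
  have hω : v1 (B 1 : F) ≠ v2 (B 1 : F) := fun h =>
    hv <| ringHom_eq_of_apply_basis_eq B <| Fin.forall_fin_two.mpr ⟨by simp [hB], h⟩
  obtain ⟨m, n, a, b, ha0, ha1, hb0, hb1, hab⟩ :=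
    exists_int_sub_eq_fract_combination hω (v1.prod v2 ((α : F) / β))
  set γ : 𝓞 F := m + n * B 1
  have hγ : v1.prod v2 γ =
      (m : ℝ) • ((1 : ℝ), (1 : ℝ)) + (n : ℝ) • (v1 (B 1 : F), v2 (B 1 : F)) := by
    ext <;> simp [γ]
  have hD' : v1.prod v2 ((α : F) / β) - v1.prod v2 γ ∈ D :=
    hD ▸ ⟨a, b, ha0, ha1, hb0, hb1, hγ ▸ hab⟩
  obtain ⟨q, -, hq⟩ := Set.mem_iUnion₂.mp (hcover hD')
  rw [sub_mem_hypRegion_iff] at hq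
  obtain ⟨r1, r2, hα, hβr, hlt⟩ := exists_chain_of_mem_hypRegion hdeg hv hβ hq
  exact ⟨q.1 + γ, q.2, r1, r2, hα, hβr, hlt⟩

theorem stmt_17 (F : Type*) [Field F] [NumberField F]
    (hdeg : Module.finrank ℚ F = 2) (v1 v2 : F →+* ℝ) (hv : v1 ≠ v2)
    (B : Module.Basis (Fin 2) ℤ (NumberField.RingOfIntegers F)) (hB : B 0 = 1)
    (D : Set (ℝ × ℝ))
    (hD : D = {p | ∃ a b : ℝ, 0 ≤ a ∧ a < 1 ∧ 0 ≤ b ∧ b < 1 ∧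
      p = a • ((1 : ℝ), (1 : ℝ)) + b • (v1 ((B 1 : NumberField.RingOfIntegers F) : F),
        v2 ((B 1 : NumberField.RingOfIntegers F) : F))})
    (Z : Finset (NumberField.RingOfIntegers F × NumberField.RingOfIntegers F))
    (hZ : ∀ q ∈ Z, q.2 ≠ 0)
    (hcover : D ⊆ ⋃ q ∈ Z, hypRegion v1 v2 q) :
    ∀ α β : NumberField.RingOfIntegers F, β ≠ 0 →
      (∃ q1 r1 : NumberField.RingOfIntegers F, α = q1 * β + r1 ∧
        |Algebra.norm ℚ (r1 : F)| < |Algebra.norm ℚ (β : F)|) ∨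
      (∃ q1 q2 r1 r2 : NumberField.RingOfIntegers F,
        α = q1 * β + r1 ∧ β = q2 * r1 + r2 ∧
        |Algebra.norm ℚ (r2 : F)| < |Algebra.norm ℚ (β : F)|) :=
  stmt_17_general F hdeg v1 v2 hv B hB D hD Z hcover
end
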